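/- Let μ be a finite positive Borel measure on the unit circle ∂𝔻 and let 0 < η < 1. There exists a constant C > 0, depending only on η, such that for every η/2-separated sequence {z_j}_{j=1}^∞ ⊂ 𝔻 (so that the Bergman balls B(z_j, η/4) are pairwise disjoint), every sequence {λ_j}_{j=1}^∞ ⊂ ℂ with Σ_j |λ_j|² P_μ(z_j) < ∞, and every sequence {c_j}_{j=1}^∞ ⊂ ℂ with |c_j| ≤ 1 for all j, one has ∫_𝔻 | Σ_{j=1}^∞ λ_j c_j (1−|z_j|²)/|B(z_j, η/4)| · χ_{B(z_j, η/4)}(z) |² P_μ(z) dA(z) ≤ C Σ_{j=1}^∞ |λ_j|² P_μ(z_j), where |B(z_j,η/4)| denotes the area of B(z_j,η/4) and χ_E the indicator function of E. -/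

import Mathlib

open MeasureTheory

noncomputable section

/-- The Poisson integral `P_μ(z) = (1/2π) ∫_{∂𝔻} (1-|z|²)/|ζ-z|² dμ(ζ)` of a measure `μ`
on the unit circle. -/
def poissonInt (μ : Measure ℂ) (z : ℂ) : ℝ :=
  (2 * Real.pi)⁻¹ * ∫ ζ, (1 - ‖z‖ ^ 2) / ‖ζ - z‖ ^ 2 ∂μ

/-- The Möbius transformation `φ_z(w) = (z - w)/(1 - z̄w)`. -/
def moebius (z w : ℂ) : ℂ := (z - w) / (1 - (starRingEnd ℂ) z * w)

/-- The Bergman metric `d(z,w) = log((1+|φ_z(w)|)/(1-|φ_z(w)|))`. -/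
def bdist (z w : ℂ) : ℝ := Real.log ((1 + ‖moebius z w‖) / (1 - ‖moebius z w‖))

/-- The Bergman ball `B(z,r) = {w ∈ 𝔻 : d(z,w) < r}`. -/
def bball (z : ℂ) (r : ℝ) : Set ℂ := {w : ℂ | w ∈ Metric.ball (0:ℂ) 1 ∧ bdist z w < r}

/-
With `ρ(z, w) = |φ_z(w)|`, one has `d = 2 artanh ρ`; since `ρ` is Möbius invariant and satisfies
the strong triangle inequality `ρ(a, b) ≤ (|a| + |b|) / (1 + |a||b|)`, the addition formula for
`artanh` makes `d` a metric on `𝔻`. So the balls `B_j = B(z_j, η/4)` are pairwise disjoint, at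
each point at most one term of the series survives, and the integral is at most
`∑_j |λ_j|² (1-|z_j|²)² / |B_j|² ∫_{B_j} P_μ`. On `B_j` Harnack's inequality gives
`P_μ ≤ (1+s)²/(1-s)⁴ · P_μ(z_j)` with `s = tanh(η/8)`, and `B_j` contains the Euclidean disc of
radius `s(1-|z_j|²)/2` about `z_j`, so `(1-|z_j|²)² / |B_j| ≤ 4/(π s²)`.
-/

open ComplexConjugate Real Function

lemma norm_one_sub_conj_mul_sq_sub_norm_sub_sq (z w : ℂ) :
    ‖1 - conj z * w‖ ^ 2 - ‖z - w‖ ^ 2 = (1 - ‖z‖ ^ 2) * (1 - ‖w‖ ^ 2) := by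
  simp only [Complex.sq_norm, Complex.normSq_apply, Complex.sub_re, Complex.sub_im,
    Complex.one_re, Complex.one_im, Complex.mul_re, Complex.mul_im, Complex.conj_re,
    Complex.conj_im]
  ring

lemma one_sub_conj_mul_ne_zero {z w : ℂ} (hz : ‖z‖ < 1) (hw : ‖w‖ ≤ 1) :
    1 - conj z * w ≠ 0 := by
  intro h
  have h1 : ‖conj z * w‖ = 1 := by rw [← sub_eq_zero.1 h, norm_one]
  rw [norm_mul, Complex.norm_conj] at h1
  nlinarith [norm_nonneg z, norm_nonneg w]

lemma abs_norm_one_sub_conj_mul_sub_le {z : ℂ} (hz : ‖z‖ ≤ 1) (w : ℂ) :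
    |‖1 - conj z * w‖ - (1 - ‖z‖ ^ 2)| ≤ ‖z‖ * ‖z - w‖ := by
  have h : ‖1 - conj z * z‖ = 1 - ‖z‖ ^ 2 := by
    rw [Complex.conj_mul', ← Complex.ofReal_pow, ← Complex.ofReal_one, ← Complex.ofReal_sub,
      Complex.norm_real, Real.norm_of_nonneg (by nlinarith [norm_nonneg z])]
  rw [← h, ← Complex.norm_conj z, ← norm_mul, show conj z * (z - w) =
    (1 - conj z * w) - (1 - conj z * z) by ring]
  exact abs_norm_sub_norm_le _ _

lemma norm_one_sub_conj_mul_of_norm_eq_one (z : ℂ) {ζ : ℂ} (hζ : ‖ζ‖ = 1) :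
    ‖1 - conj z * ζ‖ = ‖ζ - z‖ := by
  have h : 1 - conj z * ζ = ζ * conj (ζ - z) := by
    rw [map_sub, mul_sub, Complex.mul_conj', hζ]
    push_cast
    ring
  rw [h, norm_mul, hζ, one_mul, Complex.norm_conj]

lemma norm_moebius_comm (z w : ℂ) : ‖moebius z w‖ = ‖moebius w z‖ := by
  have h : 1 - conj w * z = conj (1 - conj z * w) := by simp [mul_comm]
  rw [moebius, moebius, norm_div, norm_div, norm_sub_rev, h, Complex.norm_conj]

lemma norm_moebius_lt_one {z w : ℂ} (hz : ‖z‖ < 1) (hw : ‖w‖ < 1) : ‖moebius z w‖ < 1 := by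
  have hd := norm_pos_iff.2 (one_sub_conj_mul_ne_zero hz hw.le)
  rw [moebius, norm_div, div_lt_one hd]
  refine pow_lt_pow_iff_left₀ (norm_nonneg _) hd.le two_ne_zero |>.1 ?_
  have := norm_one_sub_conj_mul_sq_sub_norm_sub_sq z w
  have : 0 < (1 - ‖z‖ ^ 2) * (1 - ‖w‖ ^ 2) :=
    mul_pos (by nlinarith [norm_nonneg z]) (by nlinarith [norm_nonneg w])
  linarith

lemma moebius_sub_moebius {w a b : ℂ} (ha : 1 - conj w * a ≠ 0) (hb : 1 - conj w * b ≠ 0) :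
    moebius w a - moebius w b =
      (1 - conj w * w) * (b - a) / ((1 - conj w * a) * (1 - conj w * b)) := by
  rw [moebius, moebius, div_sub_div _ _ ha hb]
  ring

lemma one_sub_conj_moebius_mul_moebius {w a b : ℂ} (ha : 1 - conj w * a ≠ 0)
    (hb : 1 - conj w * b ≠ 0) :
    1 - conj (moebius w a) * moebius w b =
      (1 - conj w * w) * (1 - conj a * b) / (conj (1 - conj w * a) * (1 - conj w * b)) := by
  have ha' : conj (1 - conj w * a) ≠ 0 := (map_ne_zero _).2 ha
  rw [moebius, moebius, map_div₀, div_mul_div_comm, one_sub_div (mul_ne_zero ha' hb)]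
  simp only [map_sub, map_mul, map_one, Complex.conj_conj]
  ring

lemma norm_moebius_moebius {w a b : ℂ} (hw : ‖w‖ < 1) (ha : ‖a‖ < 1) (hb : ‖b‖ < 1) :
    ‖moebius (moebius w a) (moebius w b)‖ = ‖moebius a b‖ := by
  have hwa := one_sub_conj_mul_ne_zero hw ha.le
  have hwb := one_sub_conj_mul_ne_zero hw hb.le
  have hab := one_sub_conj_mul_ne_zero ha hb.le
  have hww := one_sub_conj_mul_ne_zero hw hw.le
  have hwa' : conj (1 - conj w * a) ≠ 0 := (map_ne_zero _).2 hwa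
  have key : moebius (moebius w a) (moebius w b) * (1 - conj w * a) =
      -moebius a b * conj (1 - conj w * a) := by
    rw [moebius, moebius_sub_moebius hwa hwb, one_sub_conj_moebius_mul_moebius hwa hwb, moebius]
    -- as atoms, the factors keep the shape in which `field_simp` sees that they do not vanish
    generalize 1 - conj w * a = p at hwa hwa' ⊢
    generalize 1 - conj w * b = q at hwb ⊢
    generalize 1 - conj w * w = u at hww ⊢
    generalize 1 - conj a * b = v at hab ⊢
    field_simp
    ring
  have := congrArg norm key
  rw [norm_mul, norm_mul, norm_neg, Complex.norm_conj] at this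
  exact mul_right_cancel₀ (norm_ne_zero_iff.2 hwa) this

lemma norm_moebius_le_of_norm_lt_one {a b : ℂ} (ha : ‖a‖ < 1) (hb : ‖b‖ < 1) :
    ‖moebius a b‖ ≤ (‖a‖ + ‖b‖) / (1 + ‖a‖ * ‖b‖) := by
  have hd := norm_pos_iff.2 (one_sub_conj_mul_ne_zero ha hb.le)
  rw [moebius, norm_div, div_le_div_iff₀ hd (by positivity)]
  set t := (conj a * b).re
  have ht : |t| ≤ ‖a‖ * ‖b‖ := by
    have := Complex.abs_re_le_norm (conj a * b)
    rwa [norm_mul, Complex.norm_conj] at this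
  have hab : ‖a - b‖ ^ 2 = ‖a‖ ^ 2 + ‖b‖ ^ 2 - 2 * t := by
    simp only [t, Complex.sq_norm, Complex.normSq_apply, Complex.sub_re, Complex.sub_im,
      Complex.mul_re, Complex.conj_re, Complex.conj_im]
    ring
  have hd2 : ‖1 - conj a * b‖ ^ 2 = 1 - 2 * t + ‖a‖ ^ 2 * ‖b‖ ^ 2 := by
    simp only [t, Complex.sq_norm, Complex.normSq_apply, Complex.sub_re, Complex.sub_im,
      Complex.one_re, Complex.one_im, Complex.mul_re, Complex.mul_im, Complex.conj_re,
      Complex.conj_im]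
    ring
  refine pow_le_pow_iff_left₀ (by positivity) (by positivity) two_ne_zero |>.1 ?_
  rw [mul_pow, mul_pow, hab, hd2]
  have hpos : 0 ≤ (t + ‖a‖ * ‖b‖) * (1 - ‖a‖ ^ 2) * (1 - ‖b‖ ^ 2) :=
    mul_nonneg (mul_nonneg (by linarith [neg_abs_le t]) (by nlinarith [norm_nonneg a]))
      (by nlinarith [norm_nonneg b])
  nlinarith [norm_nonneg a, norm_nonneg b]

lemma norm_moebius_le {w a b : ℂ} (hw : ‖w‖ < 1) (ha : ‖a‖ < 1) (hb : ‖b‖ < 1) :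
    ‖moebius a b‖ ≤ (‖moebius w a‖ + ‖moebius w b‖) / (1 + ‖moebius w a‖ * ‖moebius w b‖) := by
  rw [← norm_moebius_moebius hw ha hb]
  exact norm_moebius_le_of_norm_lt_one (norm_moebius_lt_one hw ha) (norm_moebius_lt_one hw hb)

lemma Real.artanh_add_artanh {a b : ℝ} (ha : a ∈ Set.Ioo (-1) 1) (hb : b ∈ Set.Ioo (-1) 1) :
    artanh a + artanh b = artanh ((a + b) / (1 + a * b)) := by
  obtain ⟨ha₀, ha₁⟩ := ha
  obtain ⟨hb₀, hb₁⟩ := hb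
  have hab : 0 < 1 + a * b := by nlinarith
  have hu : (a + b) / (1 + a * b) ∈ Set.Icc (-1) 1 := by
    constructor <;> [rw [le_div_iff₀ hab]; rw [div_le_iff₀ hab]] <;> nlinarith
  have hadd : 1 + (a + b) / (1 + a * b) = (1 + a) * (1 + b) / (1 + a * b) := by
    field_simp
    ring
  have hsub : 1 - (a + b) / (1 + a * b) = (1 - a) * (1 - b) / (1 + a * b) := by
    field_simp
    ring
  rw [artanh_eq_half_log ⟨ha₀.le, ha₁.le⟩, artanh_eq_half_log ⟨hb₀.le, hb₁.le⟩,
    artanh_eq_half_log hu, ← mul_add, ← log_mul (div_pos (by linarith) (by linarith)).ne'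
      (div_pos (by linarith) (by linarith)).ne', hadd, hsub, div_div_div_cancel_right₀ hab.ne',
    mul_div_mul_comm]

lemma bdist_eq_two_mul_artanh {z w : ℂ} (hz : ‖z‖ < 1) (hw : ‖w‖ < 1) :
    bdist z w = 2 * artanh ‖moebius z w‖ := by
  rw [artanh_eq_half_log ⟨by linarith [norm_nonneg (moebius z w)],
    (norm_moebius_lt_one hz hw).le⟩, bdist]
  ring

lemma bdist_comm (z w : ℂ) : bdist z w = bdist w z := by
  rw [bdist, bdist, norm_moebius_comm]

lemma bdist_triangle {z₁ z₂ w : ℂ} (hz₁ : ‖z₁‖ < 1) (hz₂ : ‖z₂‖ < 1) (hw : ‖w‖ < 1) :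
    bdist z₁ z₂ ≤ bdist z₁ w + bdist w z₂ := by
  have h₁ := norm_moebius_lt_one hw hz₁
  have h₂ := norm_moebius_lt_one hw hz₂
  have h₀ : ∀ x : ℂ, -1 < ‖x‖ := fun x => by linarith [norm_nonneg x]
  rw [bdist_comm z₁ w, bdist_eq_two_mul_artanh hz₁ hz₂, bdist_eq_two_mul_artanh hw hz₁,
    bdist_eq_two_mul_artanh hw hz₂, ← mul_add,
    artanh_add_artanh ⟨h₀ _, h₁⟩ ⟨h₀ _, h₂⟩]
  gcongr
  refine artanh_le_artanh (h₀ _) ?_ (norm_moebius_le hw hz₁ hz₂)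
  rw [div_lt_one (by positivity)]
  nlinarith [norm_nonneg (moebius w z₁), norm_nonneg (moebius w z₂)]

lemma bdist_lt_iff {z w : ℂ} (hz : ‖z‖ < 1) (hw : ‖w‖ < 1) {r : ℝ} :
    bdist z w < r ↔ ‖moebius z w‖ < tanh (r / 2) := by
  rw [bdist_eq_two_mul_artanh hz hw, ← lt_div_iff₀' two_pos, ← artanh_tanh (r / 2),
    artanh_lt_artanh_iff ⟨by linarith [norm_nonneg (moebius z w)], norm_moebius_lt_one hz hw⟩
      ⟨neg_one_lt_tanh _, tanh_lt_one _⟩, artanh_tanh]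

lemma Real.tanh_pos {x : ℝ} (hx : 0 < x) : 0 < tanh x := by
  rw [tanh_eq_sinh_div_cosh]
  exact div_pos (sinh_pos_iff.2 hx) (cosh_pos x)

lemma norm_lt_one_of_mem_bball {z w : ℂ} {r : ℝ} (hw : w ∈ bball z r) : ‖w‖ < 1 :=
  mem_ball_zero_iff.1 hw.1

lemma pairwise_disjoint_bball {ι : Type*} {z : ι → ℂ} (hz : ∀ j, ‖z j‖ < 1) {r : ℝ}
    (hsep : ∀ j k, j ≠ k → 2 * r ≤ bdist (z j) (z k)) :
    Pairwise (Disjoint on fun j => bball (z j) r) := by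
  intro j k hjk
  refine Set.disjoint_left.2 fun w hwj hwk => ?_
  have := bdist_triangle (hz j) (hz k) (norm_lt_one_of_mem_bball hwj)
  rw [bdist_comm w] at this
  linarith [hsep j k hjk, hwj.2, hwk.2]

lemma measurableSet_bball (z : ℂ) (r : ℝ) : MeasurableSet (bball z r) := by
  change MeasurableSet (Metric.ball 0 1 ∩ {w | bdist z w < r})
  refine measurableSet_ball.inter (measurableSet_lt ?_ measurable_const)
  unfold bdist moebius
  fun_prop

lemma ball_subset_bball {z : ℂ} (hz : ‖z‖ < 1) (r : ℝ) :
    Metric.ball z (tanh (r / 2) * (1 - ‖z‖ ^ 2) / 2) ⊆ bball z r := by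
  intro w hw
  set s := tanh (r / 2)
  have hz2 : 0 < 1 - ‖z‖ ^ 2 := by nlinarith [norm_nonneg z]
  have hzw : ‖z - w‖ < s * (1 - ‖z‖ ^ 2) / 2 := by rwa [norm_sub_rev, ← dist_eq_norm]
  have hs0 : 0 < s := by
    by_contra! h
    nlinarith [norm_nonneg (z - w)]
  have hs1 : s < 1 := tanh_lt_one _
  have hw1 : ‖w‖ < 1 := by
    have := norm_le_norm_add_norm_sub' w z
    rw [norm_sub_rev] at this
    nlinarith [norm_nonneg z]
  refine ⟨mem_ball_zero_iff.2 hw1, (bdist_lt_iff hz hw1).2 ?_⟩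
  have hd : (1 - ‖z‖ ^ 2) * (1 - s / 2) ≤ ‖1 - conj z * w‖ := by
    have := (abs_le.1 (abs_norm_one_sub_conj_mul_sub_le hz.le w)).1
    nlinarith [mul_le_of_le_one_left (norm_nonneg (z - w)) hz.le]
  have hd0 : 0 < ‖1 - conj z * w‖ := norm_pos_iff.2 (one_sub_conj_mul_ne_zero hz hw1.le)
  rw [moebius, norm_div, div_lt_iff₀ hd0]
  calc ‖z - w‖ < s * (1 - ‖z‖ ^ 2) / 2 := hzw
    _ ≤ s * ((1 - ‖z‖ ^ 2) * (1 - s / 2)) := by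
      nlinarith [mul_pos (mul_pos hs0 hz2) (sub_pos.2 hs1)]
    _ ≤ s * ‖1 - conj z * w‖ := by gcongr

lemma volume_bball_ne_top (z : ℂ) (r : ℝ) : volume (bball z r) ≠ ⊤ := by
  refine ne_top_of_le_ne_top ?_ (measure_mono fun w hw => hw.1)
  rw [Complex.volume_ball]
  exact ENNReal.mul_ne_top (ENNReal.pow_ne_top ENNReal.ofReal_ne_top) ENNReal.coe_ne_top

lemma le_toReal_volume_bball {z : ℂ} (hz : ‖z‖ < 1) {r : ℝ} (hr : 0 < r) :
    π * (tanh (r / 2) * (1 - ‖z‖ ^ 2) / 2) ^ 2 ≤ (volume (bball z r)).toReal := by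
  have hs := Real.tanh_pos (half_pos hr)
  have hz2 : 0 < 1 - ‖z‖ ^ 2 := by nlinarith [norm_nonneg z]
  refine le_trans (le_of_eq ?_) (ENNReal.toReal_mono (volume_bball_ne_top z r)
    (measure_mono (ball_subset_bball hz r)))
  rw [Complex.volume_ball, ENNReal.toReal_mul, ENNReal.toReal_pow,
    ENNReal.toReal_ofReal (by positivity), ENNReal.coe_toReal, NNReal.coe_real_pi]
  ring

lemma ofReal_sq_norm_mul_volume_bball_le {z : ℂ} (hz : ‖z‖ < 1) {r : ℝ} (hr : 0 < r) (a : ℂ)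
    {p : ℝ} (hp : 0 ≤ p) :
    ENNReal.ofReal (‖a * (((1 - ‖z‖ ^ 2) / (volume (bball z r)).toReal : ℝ) : ℂ)‖ ^ 2 * p) *
        volume (bball z r) ≤
      ENNReal.ofReal (4 / (π * tanh (r / 2) ^ 2) * (‖a‖ ^ 2 * p)) := by
  have hs := Real.tanh_pos (half_pos hr)
  have hz2 : 0 < 1 - ‖z‖ ^ 2 := by nlinarith [norm_nonneg z]
  have hV := le_toReal_volume_bball hz hr
  set V := (volume (bball z r)).toReal
  have hV0 : 0 < V := lt_of_lt_of_le (by positivity) hV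
  rw [← ENNReal.ofReal_toReal (volume_bball_ne_top z r), ← ENNReal.ofReal_mul (by positivity)]
  refine ENNReal.ofReal_le_ofReal ?_
  have hfrac : (1 - ‖z‖ ^ 2) ^ 2 / V ≤ 4 / (π * tanh (r / 2) ^ 2) := by
    rw [div_le_div_iff₀ hV0 (by positivity)]
    nlinarith
  calc ‖a * (((1 - ‖z‖ ^ 2) / V : ℝ) : ℂ)‖ ^ 2 * p * V
      = (1 - ‖z‖ ^ 2) ^ 2 / V * (‖a‖ ^ 2 * p) := by
        rw [norm_mul, Complex.norm_real, Real.norm_of_nonneg (by positivity)]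
        field_simp
    _ ≤ 4 / (π * tanh (r / 2) ^ 2) * (‖a‖ ^ 2 * p) :=
        mul_le_mul_of_nonneg_right hfrac (by positivity)

def poissonIntegrand (w ζ : ℂ) : ℝ := (1 - ‖w‖ ^ 2) / ‖ζ - w‖ ^ 2

lemma poissonInt_eq_integral (μ : Measure ℂ) (w : ℂ) :
    poissonInt μ w = (2 * π)⁻¹ * ∫ ζ, poissonIntegrand w ζ ∂μ := rfl

lemma poissonIntegrand_nonneg {w : ℂ} (hw : ‖w‖ ≤ 1) (ζ : ℂ) :
    0 ≤ poissonIntegrand w ζ :=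
  div_nonneg (by nlinarith [norm_nonneg w]) (sq_nonneg _)

lemma poissonInt_nonneg (μ : Measure ℂ) {w : ℂ} (hw : ‖w‖ ≤ 1) : 0 ≤ poissonInt μ w :=
  mul_nonneg (by positivity) (integral_nonneg (poissonIntegrand_nonneg hw))

lemma poissonIntegrand_le_of_norm_eq_one {w ζ : ℂ} (hw : ‖w‖ < 1) (hζ : ‖ζ‖ = 1) :
    poissonIntegrand w ζ ≤ (1 - ‖w‖ ^ 2) / (1 - ‖w‖) ^ 2 := by
  have hd : 1 - ‖w‖ ≤ ‖ζ - w‖ := by linarith [norm_sub_norm_le ζ w]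
  exact div_le_div_of_nonneg_left (by nlinarith [norm_nonneg w]) (by nlinarith)
    (pow_le_pow_left₀ (by linarith) hd 2)

lemma one_sub_norm_sq_mul_le {z w : ℂ} {s : ℝ} (hz : ‖z‖ < 1) (hs : s < 1)
    (hzw : ‖z - w‖ ≤ s * ‖1 - conj z * w‖) :
    (1 - ‖w‖ ^ 2) * (1 - s) ^ 2 ≤ 1 - ‖z‖ ^ 2 := by
  have hz2 : 0 < 1 - ‖z‖ ^ 2 := by nlinarith [norm_nonneg z]
  have hD : ‖1 - conj z * w‖ * (1 - s) ≤ 1 - ‖z‖ ^ 2 := by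
    have := (abs_le.1 (abs_norm_one_sub_conj_mul_sub_le hz.le w)).2
    nlinarith [norm_nonneg (z - w)]
  have hid := norm_one_sub_conj_mul_sq_sub_norm_sub_sq z w
  have hD2 := pow_le_pow_left₀ (mul_nonneg (norm_nonneg _) (by linarith)) hD 2
  refine le_of_mul_le_mul_left ?_ hz2
  nlinarith [sq_nonneg ‖z - w‖, sq_nonneg (1 - s)]

lemma mul_norm_sub_le_mul_norm_sub {z w ζ : ℂ} {s : ℝ} (hz : ‖z‖ ≤ 1) (hζ : ‖ζ‖ = 1)
    (hs : 0 ≤ s) (hzw : ‖z - w‖ ≤ s * ‖1 - conj z * w‖) :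
    (1 - s) * ‖ζ - z‖ ≤ (1 + s) * ‖ζ - w‖ := by
  have hD : ‖1 - conj z * w‖ ≤ ‖ζ - z‖ + ‖ζ - w‖ := by
    calc ‖1 - conj z * w‖ = ‖(1 - conj z * ζ) + conj z * (ζ - w)‖ := by ring_nf
      _ ≤ ‖1 - conj z * ζ‖ + ‖conj z * (ζ - w)‖ := norm_add_le _ _
      _ ≤ ‖ζ - z‖ + ‖ζ - w‖ := by
        rw [norm_one_sub_conj_mul_of_norm_eq_one z hζ, norm_mul, Complex.norm_conj]
        nlinarith [norm_nonneg (ζ - w)]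
  have := norm_sub_le_norm_sub_add_norm_sub ζ w z
  rw [norm_sub_rev w z] at this
  nlinarith

lemma poissonIntegrand_le {z w ζ : ℂ} {s : ℝ} (hz : ‖z‖ < 1) (hw : ‖w‖ < 1) (hζ : ‖ζ‖ = 1)
    (hs₀ : 0 ≤ s) (hs₁ : s < 1) (hzw : ‖z - w‖ ≤ s * ‖1 - conj z * w‖) :
    poissonIntegrand w ζ ≤ (1 + s) ^ 2 / (1 - s) ^ 4 * poissonIntegrand z ζ := by
  have hζz : 0 < ‖ζ - z‖ := norm_sub_pos_iff.2 fun h => by rw [h] at hζ; linarith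
  have hζw : 0 < ‖ζ - w‖ := norm_sub_pos_iff.2 fun h => by rw [h] at hζ; linarith
  have hA := one_sub_norm_sq_mul_le hz hs₁ hzw
  have hB : (1 - s) ^ 2 * ‖ζ - z‖ ^ 2 ≤ (1 + s) ^ 2 * ‖ζ - w‖ ^ 2 := by
    rw [← mul_pow, ← mul_pow]
    exact pow_le_pow_left₀ (by nlinarith) (mul_norm_sub_le_mul_norm_sub hz.le hζ hs₀ hzw) 2
  rw [poissonIntegrand, poissonIntegrand, div_mul_div_comm,
    div_le_div_iff₀ (by positivity) (mul_pos (pow_pos (by linarith) 4) (by positivity))]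
  calc (1 - ‖w‖ ^ 2) * ((1 - s) ^ 4 * ‖ζ - z‖ ^ 2)
      = ((1 - ‖w‖ ^ 2) * (1 - s) ^ 2) * ((1 - s) ^ 2 * ‖ζ - z‖ ^ 2) := by ring
    _ ≤ (1 - ‖z‖ ^ 2) * ((1 + s) ^ 2 * ‖ζ - w‖ ^ 2) :=
      mul_le_mul hA hB (by positivity) (by nlinarith [norm_nonneg z])
    _ = (1 + s) ^ 2 * (1 - ‖z‖ ^ 2) * ‖ζ - w‖ ^ 2 := by ring

section PoissonIntegral

variable {μ : Measure ℂ} (hμ : μ (Metric.sphere (0 : ℂ) 1)ᶜ = 0)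
include hμ

lemma integrable_poissonIntegrand [IsFiniteMeasure μ] {w : ℂ} (hw : ‖w‖ < 1) :
    Integrable (poissonIntegrand w) μ := by
  refine Integrable.mono' (integrable_const ((1 - ‖w‖ ^ 2) / (1 - ‖w‖) ^ 2))
    (Measurable.aestronglyMeasurable (by unfold poissonIntegrand; fun_prop)) ?_
  filter_upwards [mem_ae_iff.2 hμ] with ζ hζ
  rw [Real.norm_of_nonneg (poissonIntegrand_nonneg hw.le ζ)]
  exact poissonIntegrand_le_of_norm_eq_one hw (mem_sphere_zero_iff_norm.1 hζ)

lemma poissonInt_le_of_mem_bball [IsFiniteMeasure μ] {z w : ℂ} (hz : ‖z‖ < 1) {r : ℝ}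
    (hw : w ∈ bball z r) :
    poissonInt μ w ≤ (1 + tanh (r / 2)) ^ 2 / (1 - tanh (r / 2)) ^ 4 * poissonInt μ z := by
  have hw1 := norm_lt_one_of_mem_bball hw
  have hρ := (bdist_lt_iff hz hw1).1 hw.2
  have hzw : ‖z - w‖ ≤ tanh (r / 2) * ‖1 - conj z * w‖ := by
    rw [moebius, norm_div, div_lt_iff₀ (norm_pos_iff.2 (one_sub_conj_mul_ne_zero hz hw1.le))]
      at hρ
    exact hρ.le
  have hint : ∫ ζ, poissonIntegrand w ζ ∂μ ≤
      ∫ ζ, (1 + tanh (r / 2)) ^ 2 / (1 - tanh (r / 2)) ^ 4 * poissonIntegrand z ζ ∂μ := by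
    refine integral_mono_ae (integrable_poissonIntegrand hμ hw1)
      ((integrable_poissonIntegrand hμ hz).const_mul _) ?_
    filter_upwards [mem_ae_iff.2 hμ] with ζ hζ
    exact poissonIntegrand_le hz hw1 (mem_sphere_zero_iff_norm.1 hζ) ((norm_nonneg _).trans hρ.le)
      (tanh_lt_one _) hzw
  rw [integral_const_mul] at hint
  rw [poissonInt_eq_integral, poissonInt_eq_integral, mul_left_comm]
  gcongr

end PoissonIntegral

section DisjointSum

variable {α : Type*} {B : ℕ → Set α} (hB : Pairwise (Disjoint on B)) (x : ℕ → ℂ) (f : α → ℝ)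
  (M : ℕ → ℝ) (hfM : ∀ j, ∀ w ∈ B j, f w ≤ M j)
include hB hfM

lemma ofReal_sq_norm_tsum_mul_indicator_le (w : α) :
    ENNReal.ofReal (‖∑' j, x j * (B j).indicator (fun _ => (1 : ℂ)) w‖ ^ 2 * f w) ≤
      ∑' j, (B j).indicator (fun _ => ENNReal.ofReal (‖x j‖ ^ 2 * M j)) w := by
  by_cases hw : ∃ j₀, w ∈ B j₀
  · obtain ⟨j₀, hj₀⟩ := hw
    have hzero : ∀ j ≠ j₀, x j * (B j).indicator (fun _ => (1 : ℂ)) w = 0 := fun j hj => by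
      rw [Set.indicator_of_notMem (Set.disjoint_right.1 (hB hj) hj₀), mul_zero]
    rw [tsum_eq_single j₀ hzero, Set.indicator_of_mem hj₀, mul_one]
    refine le_trans ?_ (ENNReal.le_tsum j₀)
    rw [Set.indicator_of_mem hj₀]
    exact ENNReal.ofReal_le_ofReal (mul_le_mul_of_nonneg_left (hfM j₀ w hj₀) (sq_nonneg _))
  · push Not at hw
    simp [Set.indicator_of_notMem (hw _)]

lemma lintegral_sq_norm_tsum_mul_indicator_le [MeasurableSpace α] (ν : Measure α)
    (hBm : ∀ j, MeasurableSet (B j)) :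
    ∫⁻ w, ENNReal.ofReal (‖∑' j, x j * (B j).indicator (fun _ => (1 : ℂ)) w‖ ^ 2 * f w) ∂ν ≤
      ∑' j, ENNReal.ofReal (‖x j‖ ^ 2 * M j) * ν (B j) := by
  calc _ ≤ ∫⁻ w, ∑' j, (B j).indicator (fun _ => ENNReal.ofReal (‖x j‖ ^ 2 * M j)) w ∂ν :=
        lintegral_mono (ofReal_sq_norm_tsum_mul_indicator_le hB x f M hfM)
    _ = ∑' j, ENNReal.ofReal (‖x j‖ ^ 2 * M j) * ν (B j) := by
        rw [lintegral_tsum fun j => (measurable_const.indicator (hBm j)).aemeasurable]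
        simp_rw [lintegral_indicator_const (hBm _)]

end DisjointSum

theorem stmt19_general (η : ℝ) (hη0 : 0 < η) :
    ∃ C : ℝ, 0 < C ∧
      ∀ μ : Measure ℂ, IsFiniteMeasure μ → μ ((Metric.sphere (0:ℂ) 1)ᶜ) = 0 →
      ∀ z : ℕ → ℂ, (∀ j, z j ∈ Metric.ball (0:ℂ) 1) →
        (∀ j k, j ≠ k → η / 2 ≤ bdist (z j) (z k)) →
      ∀ lam : ℕ → ℂ,
        (∑' j, ENNReal.ofReal (‖lam j‖ ^ 2 * poissonInt μ (z j))) < ⊤ →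
      ∀ c : ℕ → ℂ, (∀ j, ‖c j‖ ≤ 1) →
        (∫⁻ w in Metric.ball (0:ℂ) 1,
            ENNReal.ofReal
              (‖∑' j, lam j * c j *
                  (((1 - ‖z j‖ ^ 2) / (volume (bball (z j) (η / 4))).toReal : ℝ) : ℂ) *
                  (bball (z j) (η / 4)).indicator (fun _ => (1:ℂ)) w‖ ^ 2
                * poissonInt μ w))
          ≤ ENNReal.ofReal C *
              ∑' j, ENNReal.ofReal (‖lam j‖ ^ 2 * poissonInt μ (z j)) := by
  have hr : 0 < η / 4 := by positivity
  have hs₀ : 0 < tanh (η / 4 / 2) := Real.tanh_pos (by positivity)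
  have hs₁ : tanh (η / 4 / 2) < 1 := tanh_lt_one _
  set s := tanh (η / 4 / 2)
  set K := (1 + s) ^ 2 / (1 - s) ^ 4
  have hK : 0 < K := div_pos (by positivity) (pow_pos (by linarith) 4)
  refine ⟨4 / (π * s ^ 2) * K, by positivity, ?_⟩
  intro μ _ hμ z hz hsep lam _ c hc
  have hz' : ∀ j, ‖z j‖ < 1 := fun j => mem_ball_zero_iff.1 (hz j)
  have hdisj : Pairwise (Disjoint on fun j => bball (z j) (η / 4)) :=
    pairwise_disjoint_bball hz' fun j k hjk => by linarith [hsep j k hjk]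
  have hP : ∀ j, ∀ w ∈ bball (z j) (η / 4), poissonInt μ w ≤ K * poissonInt μ (z j) :=
    fun j _ hw => poissonInt_le_of_mem_bball hμ (hz' j) hw
  have hterm : ∀ j, 4 / (π * s ^ 2) * (‖lam j * c j‖ ^ 2 * (K * poissonInt μ (z j))) ≤
      4 / (π * s ^ 2) * K * (‖lam j‖ ^ 2 * poissonInt μ (z j)) := fun j => by
    have hlc : ‖lam j * c j‖ ≤ ‖lam j‖ := by
      rw [norm_mul]
      exact mul_le_of_le_one_right (norm_nonneg _) (hc j)
    have := poissonInt_nonneg μ (hz' j).le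
    calc _ = 4 / (π * s ^ 2) * K * (‖lam j * c j‖ ^ 2 * poissonInt μ (z j)) := by ring
      _ ≤ _ := by gcongr
  refine (setLIntegral_le_lintegral _ _).trans <|
    (lintegral_sq_norm_tsum_mul_indicator_le hdisj _ _ _ hP volume
      fun j => measurableSet_bball _ _).trans ?_
  rw [← ENNReal.tsum_mul_left]
  refine ENNReal.tsum_le_tsum fun j => (ofReal_sq_norm_mul_volume_bball_le (hz' j) hr _
    (mul_nonneg hK.le (poissonInt_nonneg μ (hz' j).le))).trans ?_
  rw [← ENNReal.ofReal_mul (by positivity)]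
  exact ENNReal.ofReal_le_ofReal (hterm j)

theorem stmt19 (η : ℝ) (hη0 : 0 < η) (hη1 : η < 1) :
    ∃ C : ℝ, 0 < C ∧
      ∀ μ : Measure ℂ, IsFiniteMeasure μ → μ ((Metric.sphere (0:ℂ) 1)ᶜ) = 0 →
      ∀ z : ℕ → ℂ, (∀ j, z j ∈ Metric.ball (0:ℂ) 1) →
        (∀ j k, j ≠ k → η / 2 ≤ bdist (z j) (z k)) →
      ∀ lam : ℕ → ℂ,
        (∑' j, ENNReal.ofReal (‖lam j‖ ^ 2 * poissonInt μ (z j))) < ⊤ →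
      ∀ c : ℕ → ℂ, (∀ j, ‖c j‖ ≤ 1) →
        (∫⁻ w in Metric.ball (0:ℂ) 1,
            ENNReal.ofReal
              (‖∑' j, lam j * c j *
                  (((1 - ‖z j‖ ^ 2) / (volume (bball (z j) (η / 4))).toReal : ℝ) : ℂ) *
                  (bball (z j) (η / 4)).indicator (fun _ => (1:ℂ)) w‖ ^ 2
                * poissonInt μ w))
          ≤ ENNReal.ofReal C *
              ∑' j, ENNReal.ofReal (‖lam j‖ ^ 2 * poissonInt μ (z j)) :=
  stmt19_general η hη0
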